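/- Let A, Σ, δ > 0 and define C(t,s) = (Σ/A)·exp(−A|t−s|) for t,s ∈ ℝ. Then (1/δ)·( C(δ,δ) − C(δ,0) − (1/δ)∫₀^δ (C(s,δ) − C(s,0)) ds ) = ((1 − e^{−δA})/(δA))·Σ. Moreover this quantity is strictly smaller than Σ for every δ > 0, and it converges to Σ as δ → 0⁺. (Consequently, for a stationary Ornstein–Uhlenbeck process with this covariance, the limit of the filtered-data diffusion estimator, (1/δ)E[(X⁰(δ) − Z(δ))(X⁰(δ) − X⁰(0))] with Z(δ) = (1/δ)∫₀^δ X⁰(s) ds, equals ((1 − e^{−δA})/(δA))Σ, so the estimator is asymptotically unbiased only if δ → 0.) -/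

import Mathlib

open Real Filter intervalIntegral

/-- Covariance function of the stationary Ornstein–Uhlenbeck process
`dX = -A X dt + √(2Σ) dW`: `C(t,s) = (Σ/A) exp(-A|t-s|)`. -/
noncomputable def OUcov (A S : ℝ) (t s : ℝ) : ℝ := S / A * Real.exp (-(A * |t - s|))

open Topology

/-!
The integral term vanishes without computing it: the reflection `s ↦ δ - s` of `[0, δ]`
swaps `C(s, δ)` and `C(s, 0)`, since `C` depends only on `|t - s|`. What remains is
`(1/δ)(C(δ,δ) - C(δ,0)) = (Σ/(δA))(1 - e^{-δA})`, and `(1 - e^{-x})/x` is `< 1` for `x > 0`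
(as `1 - x < e^{-x}`) and tends to `1 = (d/dx)(1 - e^{-x})|₀` as `x → 0`.
-/

theorem intervalIntegral.integral_eq_zero_of_reflect_eq_neg {E : Type*} [NormedAddCommGroup E]
    [NormedSpace ℝ E] {f : ℝ → E} {a b : ℝ} (hf : ∀ x, f (a + b - x) = -f x) :
    ∫ x in a..b, f x = 0 := by
  have h := integral_comp_sub_left f (a + b) (a := a) (b := b)
  simp only [hf, integral_neg, add_sub_cancel_right, add_sub_cancel_left] at h
  have htwo : (2 : ℝ) • ∫ x in a..b, f x = 0 := by
    rw [two_smul]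
    nth_rw 1 [← h]
    exact neg_add_cancel _
  simpa using htwo

section OUcov

variable (A S : ℝ)

theorem OUcov_sub_sub (c t s : ℝ) : OUcov A S (c - t) (c - s) = OUcov A S t s := by
  rw [OUcov, OUcov, sub_sub_sub_cancel_left, abs_sub_comm]

theorem OUcov_self (t : ℝ) : OUcov A S t t = S / A := by
  simp [OUcov]

theorem OUcov_zero_right {t : ℝ} (ht : 0 ≤ t) : OUcov A S t 0 = S / A * exp (-(A * t)) := by
  rw [OUcov, sub_zero, abs_of_nonneg ht]

theorem integral_OUcov_sub_OUcov_eq_zero (δ : ℝ) :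
    ∫ s in (0 : ℝ)..δ, (OUcov A S s δ - OUcov A S s 0) = 0 := by
  refine integral_eq_zero_of_reflect_eq_neg fun s => ?_
  have h₀ := OUcov_sub_sub A S δ s 0
  have hδ := OUcov_sub_sub A S δ s δ
  rw [sub_zero] at h₀
  rw [sub_self] at hδ
  rw [zero_add, h₀, hδ, neg_sub]

end OUcov

theorem one_sub_exp_neg_div_lt_one {x : ℝ} (hx : 0 < x) : (1 - exp (-x)) / x < 1 := by
  rw [div_lt_one hx]
  linarith [add_one_lt_exp (neg_ne_zero.mpr hx.ne')]

theorem tendsto_one_sub_exp_neg_div :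
    Tendsto (fun x => (1 - exp (-x)) / x) (𝓝[≠] 0) (𝓝 1) := by
  have hderiv : HasDerivAt (fun x => 1 - exp (-x)) 1 0 := by
    simpa using ((hasDerivAt_exp (-0)).comp 0 (hasDerivAt_neg 0)).const_sub 1
  simpa [slope_fun_def_field] using hderiv.tendsto_slope

/-- For the stationary OU covariance `C(t,s) = (Σ/A)e^{-A|t-s|}` and every `δ > 0`,
`(1/δ)(C(δ,δ) - C(δ,0) - (1/δ)∫_0^δ (C(s,δ) - C(s,0)) ds) = ((1 - e^{-δA})/(δA))Σ`,
this quantity is strictly smaller than `Σ` for every `δ > 0`, and it tends to `Σ` as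
`δ → 0⁺`; hence the filtered-data diffusion estimator is asymptotically unbiased only
if `δ → 0`. -/
theorem OU_diffusion_estimator_bias (A S : ℝ) (hA : 0 < A) (hS : 0 < S) :
    (∀ δ : ℝ, 0 < δ →
      (1 / δ) * (OUcov A S δ δ - OUcov A S δ 0
          - (1 / δ) * ∫ s in (0 : ℝ)..δ, (OUcov A S s δ - OUcov A S s 0))
        = (1 - Real.exp (-(δ * A))) / (δ * A) * S) ∧
    (∀ δ : ℝ, 0 < δ → (1 - Real.exp (-(δ * A))) / (δ * A) * S < S) ∧
    Tendsto (fun δ : ℝ => (1 - Real.exp (-(δ * A))) / (δ * A) * S)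
      (nhdsWithin 0 (Set.Ioi 0)) (nhds S) := by
  refine ⟨fun δ hδ => ?_, fun δ hδ => ?_, ?_⟩
  · rw [integral_OUcov_sub_OUcov_eq_zero, OUcov_self, OUcov_zero_right A S hδ.le, mul_comm A δ]
    field_simp
    ring
  · simpa using mul_lt_mul_of_pos_right (one_sub_exp_neg_div_lt_one (mul_pos hδ hA)) hS
  · have hscale : Tendsto (· * A) (𝓝[>] 0) (𝓝[>] 0) := by
      simpa only [mul_comm] using tendsto_iff_comap.2 (comap_mulLeft_nhdsGT_zero hA).ge
    have hlim := (tendsto_one_sub_exp_neg_div.mono_left (nhdsGT_le_nhdsNE 0)).comp hscale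
    simpa using hlim.mul_const S
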